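/- Let d ≥ 1 be an integer and 1 ≤ r < ∞. Let R_t(x) = Σ_{n ∈ ℤ^d} P_t(x + n) be the periodization of the Poisson kernel. There exists a constant C > 0 such that for all t ∈ (0, 1], ( ∫_{[0,1]^d} R_t(x)^r dx )^{1/r} ≤ C t^{-d(1 - 1/r)}. -/

import Mathlib

/-!
For `t ≤ 1`, `t² + |y|² ≥ t² (1 + |y|²)` gives `P_t ≤ t^{-d} P_1`, and `P_1(y) ≲ (1 + |y|)^{-(d+1)}`
is summable over `ℤ^d` uniformly for `x` in the unit cube, so `R_t ≤ K t^{-d}` there. The cube is a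
fundamental domain of `ℤ^d`, so `∫_cube R_t = ∫_{ℝ^d} P_t`, which equals `∫_{ℝ^d} P_1 < ∞` by
scaling. Hence `∫_cube R_t^r ≤ ‖R_t‖_∞^{r-1} ∫_cube R_t ≤ C t^{-d(r-1)}`.
-/

open MeasureTheory Real ENNReal

/-- The Poisson kernel on `ℝ^d`. -/
noncomputable def poissonKernelEuclidean (d : ℕ) (t : ℝ) (x : EuclideanSpace ℝ (Fin d)) : ℝ :=
  Real.Gamma (((d : ℝ) + 1) / 2) * Real.pi ^ (-(((d : ℝ) + 1) / 2)) * t *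
    (t ^ 2 + ‖x‖ ^ 2) ^ (-(((d : ℝ) + 1) / 2))

/-- The `ℤ^d`-periodization `R_t(x) = Σ_{n ∈ ℤ^d} P_t(x + n)` of the Poisson kernel. -/
noncomputable def periodicPoissonKernel (d : ℕ) (t : ℝ) (x : EuclideanSpace ℝ (Fin d)) : ℝ :=
  ∑' n : Fin d → ℤ,
    poissonKernelEuclidean d t (x + (WithLp.equiv 2 (Fin d → ℝ)).symm (fun i => (n i : ℝ)))

theorem ENNReal.ofReal_tsum_le {ι : Type*} {f : ι → ℝ} (hf : ∀ i, 0 ≤ f i) :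
    ENNReal.ofReal (∑' i, f i) ≤ ∑' i, ENNReal.ofReal (f i) := by
  by_cases h : Summable f
  · rw [ENNReal.ofReal_tsum_of_nonneg hf h]
  · simp [tsum_eq_zero_of_not_summable h]

theorem rpow_lintegral_rpow_le_of_ae_le {α : Type*} [MeasurableSpace α] {μ : Measure α}
    {f : α → ℝ≥0∞} {M : ℝ≥0∞} (hM : M ≠ ∞) (hf : ∀ᵐ x ∂μ, f x ≤ M) {r : ℝ} (hr : 1 ≤ r) :
    (∫⁻ x, f x ^ r ∂μ) ^ (1 / r) ≤ M ^ (1 - 1 / r) * (∫⁻ x, f x ∂μ) ^ (1 / r) := by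
  have hfr : ∀ᵐ x ∂μ, f x ^ r ≤ M ^ (r - 1) * f x := hf.mono fun x hx => by
    calc f x ^ r = f x ^ (r - 1) * f x := by
          simpa using ENNReal.rpow_add_of_nonneg (x := f x) (r - 1) 1 (by linarith) zero_le_one
      _ ≤ M ^ (r - 1) * f x := by gcongr
  calc (∫⁻ x, f x ^ r ∂μ) ^ (1 / r)
      ≤ (M ^ (r - 1) * ∫⁻ x, f x ∂μ) ^ (1 / r) := by
        gcongr
        rw [← lintegral_const_mul' _ _ (ENNReal.rpow_ne_top_of_nonneg (by linarith) hM)]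
        exact lintegral_mono_ae hfr
    _ = M ^ (1 - 1 / r) * (∫⁻ x, f x ∂μ) ^ (1 / r) := by
        rw [ENNReal.mul_rpow_of_nonneg _ _ (by positivity), ← ENNReal.rpow_mul]
        congr 2
        field_simp

theorem MeasureTheory.Measure.lintegral_comp_smul {E : Type*} [NormedAddCommGroup E]
    [NormedSpace ℝ E] [MeasurableSpace E] [BorelSpace E] [FiniteDimensional ℝ E]
    (μ : Measure E) [μ.IsAddHaarMeasure] (f : E → ℝ≥0∞) {R : ℝ} (hR : R ≠ 0) :
    ∫⁻ x, f (R • x) ∂μ = ENNReal.ofReal |(R ^ Module.finrank ℝ E)⁻¹| * ∫⁻ x, f x ∂μ := by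
  rw [← smul_eq_mul, ← lintegral_smul_measure, ← Measure.map_addHaar_smul μ hR]
  exact (lintegral_map_equiv f (Homeomorph.smulOfNeZero R hR).toMeasurableEquiv).symm

theorem lintegral_parallelepiped_tsum_add {E ι : Type*} [NormedAddCommGroup E] [NormedSpace ℝ E]
    [MeasurableSpace E] [BorelSpace E] [Fintype ι] (b : Module.Basis ι ℝ E) (μ : Measure E)
    [μ.IsAddHaarMeasure] {f : E → ℝ≥0∞} (hf : Measurable f) :
    ∫⁻ x in parallelepiped b, ∑' g : Submodule.span ℤ (Set.range b), f (x + g) ∂μ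
      = ∫⁻ x, f x ∂μ := by
  have : Countable (Submodule.span ℤ (Set.range b)) :=
    .of_equiv _ (b.restrictScalars ℤ).equivFun.symm.toEquiv
  rw [(ZSpan.isAddFundamentalDomain' b μ).lintegral_eq_tsum'' f,
    ← setLIntegral_congr (ZSpan.fundamentalDomain_ae_parallelepiped b μ),
    lintegral_tsum (f := fun (g : Submodule.span ℤ (Set.range b)) x => f (x + g))
      fun g => (hf.comp (measurable_add_const _)).aemeasurable]
  simp only [AddSubgroup.vadd_def, vadd_eq_add, add_comm]
  rfl

theorem one_add_norm_le_mul_one_add_norm_add {E : Type*} [SeminormedAddCommGroup E] {x : E}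
    {R : ℝ} (hx : ‖x‖ ≤ R) (y : E) : 1 + ‖y‖ ≤ (1 + R) * (1 + ‖x + y‖) := by
  have hy : ‖y‖ ≤ ‖x + y‖ + ‖x‖ := by simpa using norm_sub_le (x + y) x
  nlinarith [norm_nonneg x, norm_nonneg (x + y)]

namespace ZLattice

variable {E : Type*} [NormedAddCommGroup E] [NormedSpace ℝ E] [FiniteDimensional ℝ E]
  (L : Submodule ℤ E) [DiscreteTopology L]

theorem summable_one_add_norm_rpow {r : ℝ} (hr : r < -Module.finrank ℤ L) :
    Summable fun z : L => (1 + ‖z‖) ^ r := by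
  refine (summable_norm_rpow L r hr).of_norm_bounded_eventually ?_
  -- `‖0‖ ^ r = 0` in Lean, so the comparison with `‖z‖ ^ r` only holds off `z = 0`.
  filter_upwards [(Set.finite_singleton (0 : L)).compl_mem_cofinite] with z hz
  have hr0 : r < 0 := hr.trans_le (by simp)
  rw [Real.norm_of_nonneg (by positivity)]
  exact Real.rpow_le_rpow_of_nonpos (norm_pos_iff.2 hz) (by linarith) hr0.le

theorem exists_forall_tsum_ofReal_one_add_norm_add_rpow_le {s : Set E}
    (hs : Bornology.IsBounded s) {r : ℝ} (hr : Module.finrank ℤ L < r) :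
    ∃ C : ℝ≥0∞, C ≠ ∞ ∧ ∀ x ∈ s, ∑' z : L, ENNReal.ofReal ((1 + ‖x + z‖) ^ (-r)) ≤ C := by
  obtain ⟨R, hR0, hR⟩ := hs.subset_closedBall_lt 0 0
  have hsum := (summable_one_add_norm_rpow L (r := -r) (by linarith)).mul_left ((1 + R) ^ r)
  refine ⟨∑' z : L, ENNReal.ofReal ((1 + R) ^ r * (1 + ‖z‖) ^ (-r)), ?_, fun x hx => ?_⟩
  · rw [← ENNReal.ofReal_tsum_of_nonneg (fun z => by positivity) hsum]
    exact ENNReal.ofReal_ne_top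
  have hxR : ‖x‖ ≤ R := by simpa using hR hx
  refine ENNReal.tsum_le_tsum fun z => ENNReal.ofReal_le_ofReal ?_
  calc (1 + ‖x + z‖) ^ (-r) = (1 + R) ^ r * ((1 + R) * (1 + ‖x + z‖)) ^ (-r) := by
        rw [Real.mul_rpow (by positivity) (by positivity), ← mul_assoc,
          ← Real.rpow_add (by positivity), add_neg_cancel, Real.rpow_zero, one_mul]
    _ ≤ (1 + R) ^ r * (1 + ‖z‖) ^ (-r) := by
        refine mul_le_mul_of_nonneg_left (Real.rpow_le_rpow_of_nonpos (by positivity)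
          (one_add_norm_le_mul_one_add_norm_add hxR (z : E))
          (neg_nonpos.2 ((Nat.cast_nonneg _).trans hr.le))) (by positivity)

end ZLattice

abbrev intLattice (d : ℕ) : Submodule ℤ (EuclideanSpace ℝ (Fin d)) :=
  Submodule.span ℤ (Set.range (EuclideanSpace.basisFun (Fin d) ℝ).toBasis)

theorem finrank_intLattice (d : ℕ) : Module.finrank ℤ (intLattice d) = d := by
  simp [Module.finrank_eq_card_basis
    ((EuclideanSpace.basisFun (Fin d) ℝ).toBasis.restrictScalars ℤ)]

theorem parallelepiped_euclideanSpace_basisFun (d : ℕ) :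
    parallelepiped (EuclideanSpace.basisFun (Fin d) ℝ).toBasis =
      {x : EuclideanSpace ℝ (Fin d) | ∀ i, x i ∈ Set.Icc (0 : ℝ) 1} := by
  rw [parallelepiped_basis_eq]
  simp

theorem isCompact_unitCube (d : ℕ) :
    IsCompact {x : EuclideanSpace ℝ (Fin d) | ∀ i, x i ∈ Set.Icc (0 : ℝ) 1} := by
  rw [← parallelepiped_euclideanSpace_basisFun]
  exact (EuclideanSpace.basisFun (Fin d) ℝ).toBasis.parallelepiped.isCompact

theorem Real.self_mul_sq_rpow_neg_add_one_div_two {t : ℝ} (ht : 0 < t) (a : ℝ) :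
    t * (t ^ 2) ^ (-((a + 1) / 2)) = t ^ (-a) := by
  rw [← Real.rpow_natCast, ← Real.rpow_mul ht.le]
  nth_rw 1 [← Real.rpow_one t]
  rw [← Real.rpow_add ht]
  congr 1
  push_cast
  ring

section PoissonKernel

variable {d : ℕ}

theorem poissonKernelEuclidean_nonneg {t : ℝ} (ht : 0 ≤ t) (x : EuclideanSpace ℝ (Fin d)) :
    0 ≤ poissonKernelEuclidean d t x := by
  unfold poissonKernelEuclidean
  positivity

theorem measurable_poissonKernelEuclidean (t : ℝ) :
    Measurable (poissonKernelEuclidean d t) := by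
  unfold poissonKernelEuclidean
  fun_prop

theorem poissonKernelEuclidean_smul {t : ℝ} (ht : 0 < t) (x : EuclideanSpace ℝ (Fin d)) :
    poissonKernelEuclidean d t (t • x) = t ^ (-(d : ℝ)) * poissonKernelEuclidean d 1 x := by
  have hsplit : t ^ 2 + ‖t • x‖ ^ 2 = t ^ 2 * (1 + ‖x‖ ^ 2) := by
    rw [norm_smul, Real.norm_eq_abs, mul_pow, sq_abs]; ring
  simp only [poissonKernelEuclidean, hsplit,
    Real.mul_rpow (sq_nonneg t) (by positivity : (0 : ℝ) ≤ 1 + ‖x‖ ^ 2), one_pow, mul_one]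
  rw [← Real.self_mul_sq_rpow_neg_add_one_div_two ht]
  ring

theorem poissonKernelEuclidean_le {t : ℝ} (ht : 0 < t) (ht1 : t ≤ 1)
    (x : EuclideanSpace ℝ (Fin d)) :
    poissonKernelEuclidean d t x ≤ t ^ (-(d : ℝ)) * poissonKernelEuclidean d 1 x := by
  have hle : t ^ 2 * (1 + ‖x‖ ^ 2) ≤ t ^ 2 + ‖x‖ ^ 2 := by
    have : t ^ 2 ≤ 1 := pow_le_one₀ ht.le ht1
    nlinarith [sq_nonneg ‖x‖]
  calc poissonKernelEuclidean d t x
      ≤ Real.Gamma (((d : ℝ) + 1) / 2) * Real.pi ^ (-(((d : ℝ) + 1) / 2)) * t *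
          (t ^ 2 * (1 + ‖x‖ ^ 2)) ^ (-(((d : ℝ) + 1) / 2)) := by
        unfold poissonKernelEuclidean
        exact mul_le_mul_of_nonneg_left
          (Real.rpow_le_rpow_of_nonpos (by positivity) hle (by rw [neg_nonpos]; positivity))
          (by positivity)
    _ = t ^ (-(d : ℝ)) * poissonKernelEuclidean d 1 x := by
        rw [← poissonKernelEuclidean_smul ht]
        unfold poissonKernelEuclidean
        rw [norm_smul, Real.norm_eq_abs, mul_pow, sq_abs]
        ring_nf

theorem lintegral_poissonKernelEuclidean {t : ℝ} (ht : 0 < t) :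
    ∫⁻ x, ENNReal.ofReal (poissonKernelEuclidean d t x)
      = ∫⁻ x, ENNReal.ofReal (poissonKernelEuclidean d 1 x) := by
  have hpt : ∀ x : EuclideanSpace ℝ (Fin d), ENNReal.ofReal (poissonKernelEuclidean d t (t • x))
      = ENNReal.ofReal (t ^ d)⁻¹ * ENNReal.ofReal (poissonKernelEuclidean d 1 x) := fun x => by
    rw [poissonKernelEuclidean_smul ht, Real.rpow_neg ht.le, Real.rpow_natCast,
      ENNReal.ofReal_mul (by positivity)]
  have hscale := Measure.lintegral_comp_smul volume
    (fun x => ENNReal.ofReal (poissonKernelEuclidean d t x)) ht.ne'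
  simp only [hpt, lintegral_const_mul' _ _ ENNReal.ofReal_ne_top, finrank_euclideanSpace_fin,
    abs_of_pos (inv_pos.2 (pow_pos ht d))] at hscale
  exact ((ENNReal.mul_right_inj (by simpa using pow_pos ht d) ENNReal.ofReal_ne_top).1 hscale).symm

theorem poissonKernelEuclidean_one_eq (x : EuclideanSpace ℝ (Fin d)) :
    poissonKernelEuclidean d 1 x = Real.Gamma (((d : ℝ) + 1) / 2) *
      Real.pi ^ (-(((d : ℝ) + 1) / 2)) * (1 + ‖x‖ ^ 2) ^ (-((d : ℝ) + 1) / 2) := by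
  simp only [poissonKernelEuclidean, one_pow, mul_one, neg_div]

theorem integrable_poissonKernelEuclidean_one : Integrable (poissonKernelEuclidean d 1) := by
  simp_rw [funext poissonKernelEuclidean_one_eq]
  exact (integrable_rpow_neg_one_add_norm_sq (by simp)).const_mul _

theorem poissonKernelEuclidean_one_le (x : EuclideanSpace ℝ (Fin d)) :
    poissonKernelEuclidean d 1 x ≤ Real.Gamma (((d : ℝ) + 1) / 2) *
      Real.pi ^ (-(((d : ℝ) + 1) / 2)) * 2 ^ (((d : ℝ) + 1) / 2) *
        (1 + ‖x‖) ^ (-((d : ℝ) + 1)) := by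
  rw [poissonKernelEuclidean_one_eq, mul_assoc _ (2 ^ _)]
  gcongr
  exact rpow_neg_one_add_norm_sq_le x (by positivity)

theorem periodicPoissonKernel_eq_tsum_intLattice (t : ℝ) (x : EuclideanSpace ℝ (Fin d)) :
    periodicPoissonKernel d t x = ∑' g : intLattice d, poissonKernelEuclidean d t (x + g) := by
  rw [periodicPoissonKernel,
    ← ((EuclideanSpace.basisFun (Fin d) ℝ).toBasis.restrictScalars ℤ).equivFun.symm.toEquiv.tsum_eq]
  congr! 4 with n
  rw [LinearEquiv.coe_toEquiv, Module.Basis.equivFun_symm_apply, Submodule.coe_sum]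
  ext i
  simp_rw [Submodule.coe_smul, Module.Basis.restrictScalars_apply]
  simp [EuclideanSpace.basisFun_apply, Pi.single_apply]

theorem ofReal_periodicPoissonKernel_le_tsum {t : ℝ} (ht : 0 ≤ t)
    (x : EuclideanSpace ℝ (Fin d)) :
    ENNReal.ofReal (periodicPoissonKernel d t x)
      ≤ ∑' g : intLattice d, ENNReal.ofReal (poissonKernelEuclidean d t (x + g)) := by
  rw [periodicPoissonKernel_eq_tsum_intLattice]
  exact ENNReal.ofReal_tsum_le fun g => poissonKernelEuclidean_nonneg ht _

theorem exists_forall_ofReal_periodicPoissonKernel_le {s : Set (EuclideanSpace ℝ (Fin d))}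
    (hs : Bornology.IsBounded s) :
    ∃ K : ℝ≥0∞, K ≠ ∞ ∧ ∀ t : ℝ, 0 < t → t ≤ 1 → ∀ x ∈ s,
      ENNReal.ofReal (periodicPoissonKernel d t x) ≤ ENNReal.ofReal (t ^ (-(d : ℝ))) * K := by
  obtain ⟨C, hC, hCs⟩ := ZLattice.exists_forall_tsum_ofReal_one_add_norm_add_rpow_le
    (intLattice d) hs (r := d + 1) (by simp [finrank_intLattice])
  set A := Real.Gamma (((d : ℝ) + 1) / 2) * Real.pi ^ (-(((d : ℝ) + 1) / 2)) *
    2 ^ (((d : ℝ) + 1) / 2)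
  refine ⟨ENNReal.ofReal A * C, ENNReal.mul_ne_top ENNReal.ofReal_ne_top hC,
    fun t ht ht1 x hx => (ofReal_periodicPoissonKernel_le_tsum ht.le x).trans ?_⟩
  calc ∑' g : intLattice d, ENNReal.ofReal (poissonKernelEuclidean d t (x + g))
      ≤ ∑' g : intLattice d, ENNReal.ofReal (t ^ (-(d : ℝ))) *
          (ENNReal.ofReal A * ENNReal.ofReal ((1 + ‖x + g‖) ^ (-((d : ℝ) + 1)))) :=
        ENNReal.tsum_le_tsum fun g => by
          rw [← ENNReal.ofReal_mul (by positivity), ← ENNReal.ofReal_mul (by positivity)]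
          refine ENNReal.ofReal_le_ofReal ((poissonKernelEuclidean_le ht ht1 _).trans ?_)
          exact mul_le_mul_of_nonneg_left (poissonKernelEuclidean_one_le _) (by positivity)
    _ ≤ ENNReal.ofReal (t ^ (-(d : ℝ))) * (ENNReal.ofReal A * C) := by
        rw [ENNReal.tsum_mul_left, ENNReal.tsum_mul_left]
        gcongr
        exact hCs x hx

theorem lintegral_unitCube_periodicPoissonKernel_le {t : ℝ} (ht : 0 < t) :
    ∫⁻ x in {x : EuclideanSpace ℝ (Fin d) | ∀ i, x i ∈ Set.Icc (0 : ℝ) 1},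
        ENNReal.ofReal (periodicPoissonKernel d t x)
      ≤ ∫⁻ x, ENNReal.ofReal (poissonKernelEuclidean d 1 x) := by
  rw [← parallelepiped_euclideanSpace_basisFun, ← lintegral_poissonKernelEuclidean ht,
    ← lintegral_parallelepiped_tsum_add (EuclideanSpace.basisFun (Fin d) ℝ).toBasis volume
      (measurable_poissonKernelEuclidean t).ennreal_ofReal]
  exact lintegral_mono (ofReal_periodicPoissonKernel_le_tsum ht.le)

end PoissonKernel

theorem periodicPoissonKernel_Lr_bound_general (d : ℕ) (r : ℝ) (hr : 1 ≤ r) :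
    ∃ C : ℝ, 0 < C ∧ ∀ t : ℝ, 0 < t → t ≤ 1 →
      (∫⁻ x in {x : EuclideanSpace ℝ (Fin d) | ∀ i, x i ∈ Set.Icc (0 : ℝ) 1},
          ENNReal.ofReal (periodicPoissonKernel d t x) ^ r) ^ (1 / r)
        ≤ ENNReal.ofReal (C * t ^ (-(d : ℝ) * (1 - 1 / r))) := by
  obtain ⟨K, hK, hsup⟩ :=
    exists_forall_ofReal_periodicPoissonKernel_le (isCompact_unitCube d).isBounded
  set B := ∫⁻ x, ENNReal.ofReal (poissonKernelEuclidean d 1 x)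
  have hB : B ≠ ∞ := integrable_poissonKernelEuclidean_one.lintegral_lt_top.ne
  have hs : 0 ≤ 1 - 1 / r := sub_nonneg.2 ((div_le_one (by linarith)).2 hr)
  set A := K ^ (1 - 1 / r) * B ^ (1 / r)
  have hA : A ≠ ∞ := ENNReal.mul_ne_top (ENNReal.rpow_ne_top_of_nonneg hs hK)
    (ENNReal.rpow_ne_top_of_nonneg (by positivity) hB)
  refine ⟨A.toReal + 1, by positivity, fun t ht ht1 => ?_⟩
  calc _ ≤ (ENNReal.ofReal (t ^ (-(d : ℝ))) * K) ^ (1 - 1 / r) *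
          (∫⁻ x in {x : EuclideanSpace ℝ (Fin d) | ∀ i, x i ∈ Set.Icc (0 : ℝ) 1},
            ENNReal.ofReal (periodicPoissonKernel d t x)) ^ (1 / r) :=
        rpow_lintegral_rpow_le_of_ae_le (ENNReal.mul_ne_top ENNReal.ofReal_ne_top hK)
          (ae_restrict_of_forall_mem (isCompact_unitCube d).measurableSet (hsup t ht ht1)) hr
    _ ≤ (ENNReal.ofReal (t ^ (-(d : ℝ))) * K) ^ (1 - 1 / r) * B ^ (1 / r) := by
      gcongr
      exact lintegral_unitCube_periodicPoissonKernel_le ht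
    _ = ENNReal.ofReal (t ^ (-(d : ℝ) * (1 - 1 / r))) * A := by
      rw [ENNReal.mul_rpow_of_nonneg _ _ hs, ENNReal.ofReal_rpow_of_nonneg (by positivity) hs,
        ← Real.rpow_mul ht.le, mul_assoc]
    _ ≤ ENNReal.ofReal (t ^ (-(d : ℝ) * (1 - 1 / r))) * ENNReal.ofReal (A.toReal + 1) := by
      gcongr
      rw [ENNReal.le_ofReal_iff_toReal_le hA (by positivity)]
      linarith
    _ = _ := by rw [← ENNReal.ofReal_mul (by positivity), mul_comm]

/-- `L^r` bound for the periodized Poisson kernel: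
`‖R_t‖_{L^r([0,1]^d)} ≤ C t^{-d(1 - 1/r)}` for `0 < t ≤ 1`. -/
theorem periodicPoissonKernel_Lr_bound (d : ℕ) (hd : 1 ≤ d) (r : ℝ) (hr : 1 ≤ r) :
    ∃ C : ℝ, 0 < C ∧ ∀ t : ℝ, 0 < t → t ≤ 1 →
      (∫⁻ x in {x : EuclideanSpace ℝ (Fin d) | ∀ i, x i ∈ Set.Icc (0 : ℝ) 1},
          ENNReal.ofReal (periodicPoissonKernel d t x) ^ r) ^ (1 / r)
        ≤ ENNReal.ofReal (C * t ^ (-(d : ℝ) * (1 - 1 / r))) :=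
  periodicPoissonKernel_Lr_bound_general d r hr
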